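/- arXiv:1701.03916 — 5 statements merged into one kernel-verified Lean document; each statement's English description precedes it below -/
import Mathlib

section
/- Let (X, μ) be a measure space, let α, β > 1 be conjugate exponents (1/α + 1/β = 1), and let p : X → ℝ be a nonnegative measurable function with 0 < ∫ p(x)^α dμ(x) < ∞. Then for every λ > 0, the Hölder pseudo-divergence from p to the density q(x) = λ · p(x)^{α−1} vanishes: D_α^H(p : λ p^{α−1}) = 0. In particular the Hölder pseudo-divergence is improper: it can vanish between densities that are not proportional when α ≠ 2. -/
open MeasureTheory

/-! For `q = p ^ (α - 1)` the pointwise identities `p * q = p ^ α = q ^ β` turn Hölder's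
inequality into an equality: with `A = ∫ p ^ α`, the ratio is
`A / (A ^ (1/α) * A ^ (1/β)) = 1`. A positive factor `c` in `q` cancels between numerator
and denominator. -/

/-- The Hölder pseudo-divergence
`D_α^H(p:q) = -log( (∫ p q dμ) / ((∫ p^α dμ)^{1/α} (∫ q^β dμ)^{1/β}) )`. -/
noncomputable def holderPseudoDiv {X : Type*} [MeasurableSpace X] (μ : Measure X)
    (α β : ℝ) (p q : X → ℝ) : ℝ :=
  - Real.log ((∫ x, p x * q x ∂μ) /
      ((∫ x, p x ^ α ∂μ) ^ (1 / α) * (∫ x, q x ^ β ∂μ) ^ (1 / β)))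

lemma Real.mul_rpow_sub_one {x α : ℝ} (hx : 0 ≤ x) (hα : α ≠ 0) :
    x * x ^ (α - 1) = x ^ α := by
  rw [← Real.rpow_one_add' hx (by simpa using hα), add_sub_cancel]

lemma Real.HolderConjugate.rpow_sub_one_rpow {α β x : ℝ} (h : α.HolderConjugate β)
    (hx : 0 ≤ x) : (x ^ (α - 1)) ^ β = x ^ α := by
  rw [← Real.rpow_mul hx, h.sub_one_mul_conj]

section

variable {X : Type*} [MeasurableSpace X] (μ : Measure X)

theorem holderPseudoDiv_const_mul_right {α β c : ℝ} {p q : X → ℝ} (hc : 0 < c)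
    (hβ : β ≠ 0) (hq : ∀ x, 0 ≤ q x) :
    holderPseudoDiv μ α β p (fun x => c * q x) = holderPseudoDiv μ α β p q := by
  have hnum : ∫ x, p x * (c * q x) ∂μ = c * ∫ x, p x * q x ∂μ := by
    simp_rw [mul_left_comm (p _)]
    exact integral_const_mul c _
  have hden :
      (∫ x, (c * q x) ^ β ∂μ) ^ (1 / β) = c * (∫ x, q x ^ β ∂μ) ^ (1 / β) := by
    simp_rw [Real.mul_rpow hc.le (hq _)]
    rw [integral_const_mul, Real.mul_rpow (by positivity)
        (integral_nonneg fun x => Real.rpow_nonneg (hq x) β),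
      ← Real.rpow_mul hc.le, mul_one_div_cancel hβ, Real.rpow_one]
  unfold holderPseudoDiv
  rw [hnum, hden, mul_left_comm, mul_div_mul_left _ _ hc.ne']

theorem holderPseudoDiv_rpow_sub_one_eq_zero {α β : ℝ} (h : α.HolderConjugate β) {p : X → ℝ}
    (hp : ∀ x, 0 ≤ p x) (hA : 0 < ∫ x, p x ^ α ∂μ) :
    holderPseudoDiv μ α β p (fun x => p x ^ (α - 1)) = 0 := by
  unfold holderPseudoDiv
  simp_rw [Real.mul_rpow_sub_one (hp _) h.ne_zero, h.rpow_sub_one_rpow (hp _)]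
  rw [← Real.rpow_add hA, one_div, one_div, h.inv_add_inv_eq_one, Real.rpow_one,
    div_self hA.ne', Real.log_one, neg_zero]

end

theorem holderPseudoDiv_improper_general
    {X : Type*} [MeasurableSpace X] (μ : Measure X)
    (p : X → ℝ) (hp_nonneg : ∀ x, 0 ≤ p x)
    (α β : ℝ) (hα : 1 < α) (hconj : 1 / α + 1 / β = 1)
    (hpα_pos : 0 < ∫ x, p x ^ α ∂μ)
    (c : ℝ) (hc : 0 < c) :
    holderPseudoDiv μ α β p (fun x => c * p x ^ (α - 1)) = 0 := by
  have h : α.HolderConjugate β :=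
    Real.holderConjugate_iff.2 ⟨hα, by simpa only [one_div] using hconj⟩
  rw [holderPseudoDiv_const_mul_right μ hc h.symm.ne_zero
    fun x => Real.rpow_nonneg (hp_nonneg x) _]
  exact holderPseudoDiv_rpow_sub_one_eq_zero μ h hp_nonneg hpα_pos

/-- The Hölder pseudo-divergence is improper: for any `c > 0`,
`D_α^H(p : c · p^{α-1}) = 0`. -/
theorem holderPseudoDiv_improper
    {X : Type*} [MeasurableSpace X] (μ : Measure X)
    (p : X → ℝ) (hp : Measurable p) (hp_nonneg : ∀ x, 0 ≤ p x)
    (α β : ℝ) (hα : 1 < α) (hβ : 1 < β) (hconj : 1 / α + 1 / β = 1)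
    (hpα_int : Integrable (fun x => p x ^ α) μ)
    (hpα_pos : 0 < ∫ x, p x ^ α ∂μ)
    (c : ℝ) (hc : 0 < c) :
    holderPseudoDiv μ α β p (fun x => c * p x ^ (α - 1)) = 0 :=
  holderPseudoDiv_improper_general μ p hp_nonneg α β hα hconj hpα_pos c hc
end

section
/- Let (X, μ) be a measure space, let α, β > 1 be conjugate exponents (1/α + 1/β = 1), and let p, q : X → ℝ be nonnegative measurable probability densities (∫ p dμ = ∫ q dμ = 1) with 0 < ∫ p^{1/α} dμ < ∞, 0 < ∫ q^{1/β} dμ < ∞ and 0 < ∫ p^{1/α} q^{1/β} dμ. Define the escort distributions p_α^E(x) = p(x)^{1/α} / ∫ p^{1/α} dμ and q_β^E(x) = q(x)^{1/β} / ∫ q^{1/β} dμ. Then the Hölder escort divergence equals the skew Bhattacharyya divergence: D_α^H(p_α^E : q_β^E) = −log ∫ p(x)^{1/α} q(x)^{1−1/α} dμ(x) = B_{1/α}(p : q). -/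
open MeasureTheory

/-!
The escort `p^{1/α} / A` raised to the power `α` is `p / A^α`, so its `L^α` norm is
`(∫ p)^{1/α} / A`. In the Hölder pseudo-divergence of two escorts the normalizers `A`, `B`
therefore cancel against those of `∫ p_α^E q_β^E`, leaving `-log ∫ p^{1/α} q^{1/β}`; for
probability densities `1/β = 1 - 1/α` gives the skew Bhattacharyya divergence.
-/

namespace HolderEscort

variable {X : Type*} [MeasurableSpace X] (μ : Measure X)

noncomputable def escort (τ : ℝ) (p : X → ℝ) (x : X) : ℝ :=
  p x ^ (1 / τ) / ∫ y, p y ^ (1 / τ) ∂μ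

variable {μ}

theorem escort_rpow {τ : ℝ} (hτ : τ ≠ 0) {p : X → ℝ} (hp : 0 ≤ p) (x : X) :
    escort μ τ p x ^ τ = p x / (∫ y, p y ^ (1 / τ) ∂μ) ^ τ := by
  have hnorm : 0 ≤ ∫ y, p y ^ (1 / τ) ∂μ :=
    integral_nonneg fun y => Real.rpow_nonneg (hp y) _
  rw [escort, Real.div_rpow (Real.rpow_nonneg (hp x) _) hnorm, ← Real.rpow_mul (hp x),
    one_div_mul_cancel hτ, Real.rpow_one]

theorem integral_escort_rpow_rpow_one_div {τ : ℝ} (hτ : τ ≠ 0) {p : X → ℝ} (hp : 0 ≤ p) :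
    (∫ x, escort μ τ p x ^ τ ∂μ) ^ (1 / τ) =
      (∫ x, p x ∂μ) ^ (1 / τ) / ∫ x, p x ^ (1 / τ) ∂μ := by
  have hnorm : 0 ≤ ∫ y, p y ^ (1 / τ) ∂μ :=
    integral_nonneg fun y => Real.rpow_nonneg (hp y) _
  simp_rw [escort_rpow hτ hp, integral_div]
  rw [Real.div_rpow (integral_nonneg hp) (Real.rpow_nonneg hnorm _), ← Real.rpow_mul hnorm,
    mul_one_div_cancel hτ, Real.rpow_one]

theorem integral_escort_mul_escort (α β : ℝ) (p q : X → ℝ) :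
    ∫ x, escort μ α p x * escort μ β q x ∂μ =
      (∫ x, p x ^ (1 / α) * q x ^ (1 / β) ∂μ) /
        ((∫ x, p x ^ (1 / α) ∂μ) * ∫ x, q x ^ (1 / β) ∂μ) := by
  simp_rw [escort, div_mul_div_comm]
  exact integral_div _ _

theorem holderPseudoDiv_escort {α β : ℝ} (hα : α ≠ 0) (hβ : β ≠ 0) {p q : X → ℝ}
    (hp : 0 ≤ p) (hq : 0 ≤ q) (hpα : ∫ x, p x ^ (1 / α) ∂μ ≠ 0)
    (hqβ : ∫ x, q x ^ (1 / β) ∂μ ≠ 0) :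
    holderPseudoDiv μ α β (escort μ α p) (escort μ β q) =
      -Real.log ((∫ x, p x ^ (1 / α) * q x ^ (1 / β) ∂μ) /
        ((∫ x, p x ∂μ) ^ (1 / α) * (∫ x, q x ∂μ) ^ (1 / β))) := by
  rw [holderPseudoDiv, integral_escort_mul_escort, integral_escort_rpow_rpow_one_div hα hp,
    integral_escort_rpow_rpow_one_div hβ hq, div_mul_div_comm,
    div_div_div_cancel_right₀ (mul_ne_zero hpα hqβ)]

end HolderEscort

open HolderEscort in
theorem holder_escort_eq_skew_bhattacharyya_general
    {X : Type*} [MeasurableSpace X] (μ : Measure X)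
    (p q : X → ℝ)
    (hp_nonneg : ∀ x, 0 ≤ p x) (hq_nonneg : ∀ x, 0 ≤ q x)
    (α β : ℝ) (hα : 1 < α) (hβ : 1 < β) (hconj : 1 / α + 1 / β = 1)
    (hp_prob : ∫ x, p x ∂μ = 1) (hq_prob : ∫ x, q x ∂μ = 1)
    (hpα_pos : 0 < ∫ x, p x ^ (1 / α) ∂μ)
    (hqβ_pos : 0 < ∫ x, q x ^ (1 / β) ∂μ) :
    holderPseudoDiv μ α β
        (fun x => p x ^ (1 / α) / ∫ y, p y ^ (1 / α) ∂μ)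
        (fun x => q x ^ (1 / β) / ∫ y, q y ^ (1 / β) ∂μ) =
      - Real.log (∫ x, p x ^ (1 / α) * q x ^ (1 - 1 / α) ∂μ) := by
  have hβ_exp : 1 - 1 / α = 1 / β := by linarith
  have h := holderPseudoDiv_escort (μ := μ) (zero_lt_one.trans hα).ne' (zero_lt_one.trans hβ).ne'
    hp_nonneg hq_nonneg hpα_pos.ne' hqβ_pos.ne'
  rw [hp_prob, hq_prob, Real.one_rpow, Real.one_rpow, mul_one, div_one] at h
  rw [hβ_exp]
  exact h

/-- The Hölder escort divergence equals the skew Bhattacharyya divergence: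
`D_α^H(p_α^E : q_β^E) = -log ∫ p^{1/α} q^{1-1/α} dμ = B_{1/α}(p:q)`. -/
theorem holder_escort_eq_skew_bhattacharyya
    {X : Type*} [MeasurableSpace X] (μ : Measure X)
    (p q : X → ℝ) (hp : Measurable p) (hq : Measurable q)
    (hp_nonneg : ∀ x, 0 ≤ p x) (hq_nonneg : ∀ x, 0 ≤ q x)
    (α β : ℝ) (hα : 1 < α) (hβ : 1 < β) (hconj : 1 / α + 1 / β = 1)
    (hp_prob : ∫ x, p x ∂μ = 1) (hq_prob : ∫ x, q x ∂μ = 1)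
    (hpα_int : Integrable (fun x => p x ^ (1 / α)) μ)
    (hpα_pos : 0 < ∫ x, p x ^ (1 / α) ∂μ)
    (hqβ_int : Integrable (fun x => q x ^ (1 / β)) μ)
    (hqβ_pos : 0 < ∫ x, q x ^ (1 / β) ∂μ)
    (hpq_pos : 0 < ∫ x, p x ^ (1 / α) * q x ^ (1 / β) ∂μ) :
    holderPseudoDiv μ α β
        (fun x => p x ^ (1 / α) / ∫ y, p y ^ (1 / α) ∂μ)
        (fun x => q x ^ (1 / β) / ∫ y, q y ^ (1 / β) ∂μ) =
      - Real.log (∫ x, p x ^ (1 / α) * q x ^ (1 - 1 / α) ∂μ) :=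
  holder_escort_eq_skew_bhattacharyya_general μ p q hp_nonneg hq_nonneg α β hα hβ hconj hp_prob
    hq_prob hpα_pos hqβ_pos
end

section
/- Let (X, μ) be a measure space, let α, β > 1 be conjugate exponents (1/α + 1/β = 1), let γ > 0, and let p, q : X → ℝ be nonnegative measurable functions with 0 < ∫ p^γ dμ < ∞, 0 < ∫ q^γ dμ < ∞ and 0 < ∫ p^{γ/α} q^{γ/β} dμ. Define the escort distributions p_{1/γ}^E(x) = p(x)^γ / ∫ p^γ dμ and q_{1/γ}^E(x) = q(x)^γ / ∫ q^γ dμ. Then the Hölder divergence equals the skew Bhattacharyya divergence between the escort distributions: D_{α,γ}^H(p : q) = B_{1/α}(p_{1/γ}^E : q_{1/γ}^E) = −log ∫ (p_{1/γ}^E(x))^{1/α} (q_{1/γ}^E(x))^{1/β} dμ(x). -/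
open MeasureTheory

/-- The (proper) Hölder divergence
`D_{α,γ}^H(p:q) = -log( (∫ p^{γ/α} q^{γ/β} dμ) / ((∫ p^γ dμ)^{1/α} (∫ q^γ dμ)^{1/β}) )`. -/
noncomputable def holderDiv {X : Type*} [MeasurableSpace X] (μ : Measure X)
    (α β γ : ℝ) (p q : X → ℝ) : ℝ :=
  - Real.log ((∫ x, p x ^ (γ / α) * q x ^ (γ / β) ∂μ) /
      ((∫ x, p x ^ γ ∂μ) ^ (1 / α) * (∫ x, q x ^ γ ∂μ) ^ (1 / β)))

theorem Real.rpow_div_rpow_one_div {a c : ℝ} (ha : 0 ≤ a) (hc : 0 ≤ c) (γ s : ℝ) :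
    (a ^ γ / c) ^ (1 / s) = a ^ (γ / s) / c ^ (1 / s) := by
  rw [Real.div_rpow (Real.rpow_nonneg ha γ) hc, ← Real.rpow_mul ha, mul_one_div]

theorem integral_rpow_div_mul_rpow_div {X : Type*} [MeasurableSpace X] (μ : Measure X)
    {p q : X → ℝ} (hp : ∀ x, 0 ≤ p x) (hq : ∀ x, 0 ≤ q x) {c d : ℝ} (hc : 0 ≤ c) (hd : 0 ≤ d)
    (α β γ : ℝ) :
    ∫ x, (p x ^ γ / c) ^ (1 / α) * (q x ^ γ / d) ^ (1 / β) ∂μ =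
      (∫ x, p x ^ (γ / α) * q x ^ (γ / β) ∂μ) / (c ^ (1 / α) * d ^ (1 / β)) := by
  rw [← integral_div]
  congr 1 with x
  rw [Real.rpow_div_rpow_one_div (hp x) hc, Real.rpow_div_rpow_one_div (hq x) hd,
    div_mul_div_comm]

theorem holderDiv_eq_skew_bhattacharyya_of_escorts_general
    {X : Type*} [MeasurableSpace X] (μ : Measure X)
    (p q : X → ℝ)
    (hp_nonneg : ∀ x, 0 ≤ p x) (hq_nonneg : ∀ x, 0 ≤ q x)
    (α β : ℝ)
    (γ : ℝ) :
    holderDiv μ α β γ p q =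
      - Real.log (∫ x, (p x ^ γ / ∫ y, p y ^ γ ∂μ) ^ (1 / α) *
          (q x ^ γ / ∫ y, q y ^ γ ∂μ) ^ (1 / β) ∂μ) := by
  rw [holderDiv, integral_rpow_div_mul_rpow_div μ hp_nonneg hq_nonneg
    (integral_nonneg fun x => Real.rpow_nonneg (hp_nonneg x) γ)
    (integral_nonneg fun x => Real.rpow_nonneg (hq_nonneg x) γ)]

/-- The Hölder divergence equals the skew Bhattacharyya divergence between the
escort distributions `p_{1/γ}^E = p^γ / ∫ p^γ dμ` and `q_{1/γ}^E = q^γ / ∫ q^γ dμ`: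
`D_{α,γ}^H(p:q) = B_{1/α}(p_{1/γ}^E : q_{1/γ}^E)
  = -log ∫ (p_{1/γ}^E)^{1/α} (q_{1/γ}^E)^{1/β} dμ`. -/
theorem holderDiv_eq_skew_bhattacharyya_of_escorts
    {X : Type*} [MeasurableSpace X] (μ : Measure X)
    (p q : X → ℝ) (hp : Measurable p) (hq : Measurable q)
    (hp_nonneg : ∀ x, 0 ≤ p x) (hq_nonneg : ∀ x, 0 ≤ q x)
    (α β : ℝ) (hα : 1 < α) (hβ : 1 < β) (hconj : 1 / α + 1 / β = 1)
    (γ : ℝ) (hγ : 0 < γ)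
    (hpγ_int : Integrable (fun x => p x ^ γ) μ)
    (hpγ_pos : 0 < ∫ x, p x ^ γ ∂μ)
    (hqγ_int : Integrable (fun x => q x ^ γ) μ)
    (hqγ_pos : 0 < ∫ x, q x ^ γ ∂μ)
    (hpq_pos : 0 < ∫ x, p x ^ (γ / α) * q x ^ (γ / β) ∂μ) :
    holderDiv μ α β γ p q =
      - Real.log (∫ x, (p x ^ γ / ∫ y, p y ^ γ ∂μ) ^ (1 / α) *
          (q x ^ γ / ∫ y, q y ^ γ ∂μ) ^ (1 / β) ∂μ) :=
  holderDiv_eq_skew_bhattacharyya_of_escorts_general μ p q hp_nonneg hq_nonneg α β γ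
end

section
/- Let (X, μ) be a measure space, t : X → ℝ^d a measurable function, and let α, β > 1 be conjugate exponents (1/α + 1/β = 1). Let θ_p, θ_q ∈ ℝ^d be such that Z(θ) = ∫ exp⟨θ, t(x)⟩ dμ(x) is finite and positive at each of θ_p, θ_q, α θ_p, β θ_q and θ_p + θ_q; define F(θ) = log Z(θ) and p_θ(x) = exp(⟨θ, t(x)⟩ − F(θ)). Then the Hölder pseudo-divergence between p_{θ_p} and p_{θ_q} admits the closed form D_α^H(p_{θ_p} : p_{θ_q}) = (1/α)·F(α θ_p) + (1/β)·F(β θ_q) − F(θ_p + θ_q). -/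
open MeasureTheory RealInnerProductSpace

/-- The log-normalizer `F(θ) = log ∫ exp⟪θ, t(x)⟫ dμ(x)` of an exponential
family with sufficient statistic `t`. -/
noncomputable def logNormalizer {X : Type*} [MeasurableSpace X] (μ : Measure X)
    {d : ℕ} (t : X → EuclideanSpace ℝ (Fin d)) (θ : EuclideanSpace ℝ (Fin d)) : ℝ :=
  Real.log (∫ x, Real.exp ⟪θ, t x⟫ ∂μ)

/-- The exponential-family density `p_θ(x) = exp(⟪θ, t(x)⟫ - F(θ))`. -/
noncomputable def expFamDensity {X : Type*} [MeasurableSpace X] (μ : Measure X)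
    {d : ℕ} (t : X → EuclideanSpace ℝ (Fin d)) (θ : EuclideanSpace ℝ (Fin d))
    (x : X) : ℝ :=
  Real.exp (⟪θ, t x⟫ - logNormalizer μ t θ)

/-!
Every power and every product of exponential-family densities is again an exponential
function of `⟪θ, t x⟫` times a constant: `p_θ ^ a = e^{-a F(θ)} exp⟪a • θ, t⟫` and
`p_θ p_θ' = e^{-F(θ) - F(θ')} exp⟪θ + θ', t⟫`. Hence the three integrals in the Hölder
pseudo-divergence are partition functions `Z` up to these factors, which cancel in the ratio
after taking the `1/α`-th and `1/β`-th roots; what is left is the logarithm of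
`Z(θp + θq) / (Z(α θp)^{1/α} Z(β θq)^{1/β})`.
-/

namespace ExpFamily

variable {X : Type*} [MeasurableSpace X] (μ : Measure X) {d : ℕ}
  (t : X → EuclideanSpace ℝ (Fin d))

noncomputable def partitionFunction (θ : EuclideanSpace ℝ (Fin d)) : ℝ :=
  ∫ x, Real.exp ⟪θ, t x⟫ ∂μ

theorem logNormalizer_eq_log_partitionFunction (θ : EuclideanSpace ℝ (Fin d)) :
    logNormalizer μ t θ = Real.log (partitionFunction μ t θ) :=
  rfl

theorem partitionFunction_nonneg (θ : EuclideanSpace ℝ (Fin d)) :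
    0 ≤ partitionFunction μ t θ :=
  integral_nonneg fun _ => (Real.exp_pos _).le

theorem expFamDensity_mul_expFamDensity (θ θ' : EuclideanSpace ℝ (Fin d)) (x : X) :
    expFamDensity μ t θ x * expFamDensity μ t θ' x =
      Real.exp (-(logNormalizer μ t θ + logNormalizer μ t θ')) * Real.exp ⟪θ + θ', t x⟫ := by
  simp only [expFamDensity, ← Real.exp_add, inner_add_left]
  ring_nf

theorem expFamDensity_rpow (θ : EuclideanSpace ℝ (Fin d)) (a : ℝ) (x : X) :
    expFamDensity μ t θ x ^ a =
      Real.exp (-(a * logNormalizer μ t θ)) * Real.exp ⟪a • θ, t x⟫ := by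
  simp only [expFamDensity, ← Real.exp_mul, ← Real.exp_add, real_inner_smul_left]
  ring_nf

theorem integral_expFamDensity_mul_expFamDensity (θ θ' : EuclideanSpace ℝ (Fin d)) :
    ∫ x, expFamDensity μ t θ x * expFamDensity μ t θ' x ∂μ =
      Real.exp (-(logNormalizer μ t θ + logNormalizer μ t θ')) *
        partitionFunction μ t (θ + θ') := by
  simp only [expFamDensity_mul_expFamDensity, integral_const_mul, partitionFunction]

theorem integral_expFamDensity_rpow (θ : EuclideanSpace ℝ (Fin d)) (a : ℝ) :
    ∫ x, expFamDensity μ t θ x ^ a ∂μ =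
      Real.exp (-(a * logNormalizer μ t θ)) * partitionFunction μ t (a • θ) := by
  simp only [expFamDensity_rpow, integral_const_mul, partitionFunction]

theorem integral_expFamDensity_rpow_rpow_inv (θ : EuclideanSpace ℝ (Fin d)) {a : ℝ}
    (ha : a ≠ 0) :
    (∫ x, expFamDensity μ t θ x ^ a ∂μ) ^ (1 / a) =
      Real.exp (-logNormalizer μ t θ) * partitionFunction μ t (a • θ) ^ (1 / a) := by
  rw [integral_expFamDensity_rpow,
    Real.mul_rpow (Real.exp_pos _).le (partitionFunction_nonneg μ t _), ← Real.exp_mul]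
  congr 2
  field_simp

theorem holderPseudoDiv_expFamDensity {α β : ℝ} (hα : α ≠ 0) (hβ : β ≠ 0)
    (θp θq : EuclideanSpace ℝ (Fin d)) :
    holderPseudoDiv μ α β (expFamDensity μ t θp) (expFamDensity μ t θq) =
      -Real.log (partitionFunction μ t (θp + θq) /
        (partitionFunction μ t (α • θp) ^ (1 / α) *
          partitionFunction μ t (β • θq) ^ (1 / β))) := by
  rw [holderPseudoDiv, integral_expFamDensity_mul_expFamDensity,
    integral_expFamDensity_rpow_rpow_inv μ t θp hα,
    integral_expFamDensity_rpow_rpow_inv μ t θq hβ, neg_add, Real.exp_add]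
  congr 2
  field_simp

end ExpFamily

open ExpFamily in
theorem holderPseudoDiv_expFam_closed_form_general
    {X : Type*} [MeasurableSpace X] (μ : Measure X) {d : ℕ}
    (t : X → EuclideanSpace ℝ (Fin d))
    (α β : ℝ) (hα : 1 < α) (hβ : 1 < β)
    (θp θq : EuclideanSpace ℝ (Fin d))
    (hZαp_pos : 0 < ∫ x, Real.exp ⟪α • θp, t x⟫ ∂μ)
    (hZβq_pos : 0 < ∫ x, Real.exp ⟪β • θq, t x⟫ ∂μ)
    (hZpq_pos : 0 < ∫ x, Real.exp ⟪θp + θq, t x⟫ ∂μ) :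
    holderPseudoDiv μ α β (expFamDensity μ t θp) (expFamDensity μ t θq) =
      (1 / α) * logNormalizer μ t (α • θp) + (1 / β) * logNormalizer μ t (β • θq) -
        logNormalizer μ t (θp + θq) := by
  have hZα : 0 < partitionFunction μ t (α • θp) := hZαp_pos
  have hZβ : 0 < partitionFunction μ t (β • θq) := hZβq_pos
  have hZpq : 0 < partitionFunction μ t (θp + θq) := hZpq_pos
  rw [holderPseudoDiv_expFamDensity μ t (by positivity) (by positivity),
    Real.log_div hZpq.ne' (by positivity), Real.log_mul (by positivity) (by positivity),
    Real.log_rpow hZα, Real.log_rpow hZβ]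
  simp only [logNormalizer_eq_log_partitionFunction]
  ring

/-- Closed form of the Hölder pseudo-divergence for exponential families:
`D_α^H(p_{θp} : p_{θq}) = (1/α) F(α θp) + (1/β) F(β θq) - F(θp + θq)`. -/
theorem holderPseudoDiv_expFam_closed_form
    {X : Type*} [MeasurableSpace X] (μ : Measure X) {d : ℕ}
    (t : X → EuclideanSpace ℝ (Fin d)) (ht : Measurable t)
    (α β : ℝ) (hα : 1 < α) (hβ : 1 < β) (hconj : 1 / α + 1 / β = 1)
    (θp θq : EuclideanSpace ℝ (Fin d))
    (hZp_int : Integrable (fun x => Real.exp ⟪θp, t x⟫) μ)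
    (hZp_pos : 0 < ∫ x, Real.exp ⟪θp, t x⟫ ∂μ)
    (hZq_int : Integrable (fun x => Real.exp ⟪θq, t x⟫) μ)
    (hZq_pos : 0 < ∫ x, Real.exp ⟪θq, t x⟫ ∂μ)
    (hZαp_int : Integrable (fun x => Real.exp ⟪α • θp, t x⟫) μ)
    (hZαp_pos : 0 < ∫ x, Real.exp ⟪α • θp, t x⟫ ∂μ)
    (hZβq_int : Integrable (fun x => Real.exp ⟪β • θq, t x⟫) μ)
    (hZβq_pos : 0 < ∫ x, Real.exp ⟪β • θq, t x⟫ ∂μ)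
    (hZpq_int : Integrable (fun x => Real.exp ⟪θp + θq, t x⟫) μ)
    (hZpq_pos : 0 < ∫ x, Real.exp ⟪θp + θq, t x⟫ ∂μ) :
    holderPseudoDiv μ α β (expFamDensity μ t θp) (expFamDensity μ t θq) =
      (1 / α) * logNormalizer μ t (α • θp) + (1 / β) * logNormalizer μ t (β • θq) -
        logNormalizer μ t (θp + θq) :=
  holderPseudoDiv_expFam_closed_form_general μ t α β hα hβ θp θq hZαp_pos hZβq_pos hZpq_pos
end

section
/- Let (X, μ) be a measure space, t : X → ℝ^d a measurable function, let α, β > 1 be conjugate exponents (1/α + 1/β = 1) and let γ > 0. Let θ_p, θ_q ∈ ℝ^d be such that Z(θ) = ∫ exp⟨θ, t(x)⟩ dμ(x) is finite and positive at each of θ_p, θ_q, γ θ_p, γ θ_q and (γ/α) θ_p + (γ/β) θ_q; define F(θ) = log Z(θ) and p_θ(x) = exp(⟨θ, t(x)⟩ − F(θ)). Then the Hölder divergence between p_{θ_p} and p_{θ_q} admits the closed form D_{α,γ}^H(p_{θ_p} : p_{θ_q}) = (1/α)·F(γ θ_p) + (1/β)·F(γ θ_q) − F( (γ/α) θ_p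 + (γ/β) θ_q ). -/
open MeasureTheory RealInnerProductSpace

/-! Powers of an exponential-family density stay in the family up to a constant factor,
`p_θ^a p_η^b = exp(-a F(θ) - b F(η)) exp⟪aθ + bη, t⟫`, so every integral in the Hölder
divergence is an exponential of log-normalizers. Taking logarithms, the divergence becomes
an affine combination of log-normalizers, in which `F(θp)` and `F(θq)` cancel. -/

section

variable {X : Type*} [MeasurableSpace X] (μ : Measure X)

theorem holderDiv_eq_sub_log_integral {α β γ : ℝ} {p q : X → ℝ}
    (hmix : 0 < ∫ x, p x ^ (γ / α) * q x ^ (γ / β) ∂μ)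
    (hp : 0 < ∫ x, p x ^ γ ∂μ) (hq : 0 < ∫ x, q x ^ γ ∂μ) :
    holderDiv μ α β γ p q =
      (1 / α) * Real.log (∫ x, p x ^ γ ∂μ) + (1 / β) * Real.log (∫ x, q x ^ γ ∂μ) -
        Real.log (∫ x, p x ^ (γ / α) * q x ^ (γ / β) ∂μ) := by
  rw [holderDiv, Real.log_div hmix.ne' (by positivity),
    Real.log_mul (by positivity) (by positivity), Real.log_rpow hp, Real.log_rpow hq]
  ring

variable {d : ℕ} (t : X → EuclideanSpace ℝ (Fin d))

theorem exp_logNormalizer {θ : EuclideanSpace ℝ (Fin d)}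
    (hZ : 0 < ∫ x, Real.exp ⟪θ, t x⟫ ∂μ) :
    Real.exp (logNormalizer μ t θ) = ∫ x, Real.exp ⟪θ, t x⟫ ∂μ :=
  Real.exp_log hZ

theorem expFamDensity_rpow (θ : EuclideanSpace ℝ (Fin d)) (s : ℝ) (x : X) :
    expFamDensity μ t θ x ^ s =
      Real.exp (-(s * logNormalizer μ t θ)) * Real.exp ⟪s • θ, t x⟫ := by
  rw [expFamDensity, ← Real.exp_mul, ← Real.exp_add, real_inner_smul_left]
  ring_nf

theorem expFamDensity_rpow_mul_rpow (θ η : EuclideanSpace ℝ (Fin d)) (a b : ℝ) (x : X) :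
    expFamDensity μ t θ x ^ a * expFamDensity μ t η x ^ b =
      Real.exp (-(a * logNormalizer μ t θ + b * logNormalizer μ t η)) *
        Real.exp ⟪a • θ + b • η, t x⟫ := by
  rw [expFamDensity_rpow, expFamDensity_rpow, inner_add_left, Real.exp_add, neg_add,
    Real.exp_add]
  ring

theorem integral_expFamDensity_rpow (θ : EuclideanSpace ℝ (Fin d)) (s : ℝ)
    (hZ : 0 < ∫ x, Real.exp ⟪s • θ, t x⟫ ∂μ) :
    ∫ x, expFamDensity μ t θ x ^ s ∂μ =
      Real.exp (logNormalizer μ t (s • θ) - s * logNormalizer μ t θ) := by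
  simp_rw [expFamDensity_rpow, integral_const_mul]
  rw [sub_eq_neg_add, Real.exp_add, exp_logNormalizer μ t hZ]

theorem integral_expFamDensity_rpow_mul_rpow (θ η : EuclideanSpace ℝ (Fin d)) (a b : ℝ)
    (hZ : 0 < ∫ x, Real.exp ⟪a • θ + b • η, t x⟫ ∂μ) :
    ∫ x, expFamDensity μ t θ x ^ a * expFamDensity μ t η x ^ b ∂μ =
      Real.exp (logNormalizer μ t (a • θ + b • η) -
        (a * logNormalizer μ t θ + b * logNormalizer μ t η)) := by
  simp_rw [expFamDensity_rpow_mul_rpow, integral_const_mul]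
  rw [sub_eq_neg_add, Real.exp_add, exp_logNormalizer μ t hZ]

end

theorem holderDiv_expFam_closed_form_general
    {X : Type*} [MeasurableSpace X] (μ : Measure X) {d : ℕ}
    (t : X → EuclideanSpace ℝ (Fin d))
    (α β : ℝ)
    (γ : ℝ)
    (θp θq : EuclideanSpace ℝ (Fin d))
    (hZγp_pos : 0 < ∫ x, Real.exp ⟪γ • θp, t x⟫ ∂μ)
    (hZγq_pos : 0 < ∫ x, Real.exp ⟪γ • θq, t x⟫ ∂μ)
    (hZmix_pos : 0 < ∫ x, Real.exp ⟪(γ / α) • θp + (γ / β) • θq, t x⟫ ∂μ) :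
    holderDiv μ α β γ (expFamDensity μ t θp) (expFamDensity μ t θq) =
      (1 / α) * logNormalizer μ t (γ • θp) + (1 / β) * logNormalizer μ t (γ • θq) -
        logNormalizer μ t ((γ / α) • θp + (γ / β) • θq) := by
  have hp := integral_expFamDensity_rpow μ t θp γ hZγp_pos
  have hq := integral_expFamDensity_rpow μ t θq γ hZγq_pos
  have hmix := integral_expFamDensity_rpow_mul_rpow μ t θp θq (γ / α) (γ / β) hZmix_pos
  rw [holderDiv_eq_sub_log_integral μ (hmix ▸ Real.exp_pos _) (hp ▸ Real.exp_pos _)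
    (hq ▸ Real.exp_pos _), hp, hq, hmix, Real.log_exp, Real.log_exp, Real.log_exp]
  ring

/-- Closed form of the Hölder divergence for exponential families:
`D_{α,γ}^H(p_{θp} : p_{θq}) = (1/α) F(γ θp) + (1/β) F(γ θq) - F((γ/α) θp + (γ/β) θq)`. -/
theorem holderDiv_expFam_closed_form
    {X : Type*} [MeasurableSpace X] (μ : Measure X) {d : ℕ}
    (t : X → EuclideanSpace ℝ (Fin d)) (ht : Measurable t)
    (α β : ℝ) (hα : 1 < α) (hβ : 1 < β) (hconj : 1 / α + 1 / β = 1)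
    (γ : ℝ) (hγ : 0 < γ)
    (θp θq : EuclideanSpace ℝ (Fin d))
    (hZp_int : Integrable (fun x => Real.exp ⟪θp, t x⟫) μ)
    (hZp_pos : 0 < ∫ x, Real.exp ⟪θp, t x⟫ ∂μ)
    (hZq_int : Integrable (fun x => Real.exp ⟪θq, t x⟫) μ)
    (hZq_pos : 0 < ∫ x, Real.exp ⟪θq, t x⟫ ∂μ)
    (hZγp_int : Integrable (fun x => Real.exp ⟪γ • θp, t x⟫) μ)
    (hZγp_pos : 0 < ∫ x, Real.exp ⟪γ • θp, t x⟫ ∂μ)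
    (hZγq_int : Integrable (fun x => Real.exp ⟪γ • θq, t x⟫) μ)
    (hZγq_pos : 0 < ∫ x, Real.exp ⟪γ • θq, t x⟫ ∂μ)
    (hZmix_int : Integrable (fun x => Real.exp ⟪(γ / α) • θp + (γ / β) • θq, t x⟫) μ)
    (hZmix_pos : 0 < ∫ x, Real.exp ⟪(γ / α) • θp + (γ / β) • θq, t x⟫ ∂μ) :
    holderDiv μ α β γ (expFamDensity μ t θp) (expFamDensity μ t θq) =
      (1 / α) * logNormalizer μ t (γ • θp) + (1 / β) * logNormalizer μ t (γ • θq) -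
        logNormalizer μ t ((γ / α) • θp + (γ / β) • θq) :=
  holderDiv_expFam_closed_form_general μ t α β γ θp θq hZγp_pos hZγq_pos hZmix_pos
end
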